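/- Let Λ be a countable finitely aligned category of paths and let α, β ∈ Λ with α ≠ β, s(α) = s(β), and r(α) = r(β). Then Λ has {α,β}-periodicity (i.e., αγ ⋔ βγ for every γ ∈ s(α)Λ) if and only if αx = βx for every x ∈ s(α)∂Λ, where s(α)∂Λ = ∂Λ ∩ s(α)Λ*. -/

import Mathlib

universe u v

/-- A category of paths: a small category (objects identified with identity
morphisms) with left and right cancellation and no inverses. -/
structure CategoryOfPaths (Λ : Type u) where
  s : Λ → Λ
  r : Λ → Λ
  comp : Λ → Λ → Λ
  s_comp : ∀ {α β : Λ}, s α = r β → s (comp α β) = s β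
  r_comp : ∀ {α β : Λ}, s α = r β → r (comp α β) = r α
  comp_assoc : ∀ {α β γ : Λ}, s α = r β → s β = r γ →
    comp (comp α β) γ = comp α (comp β γ)
  id_comp : ∀ α : Λ, comp (r α) α = α
  comp_id : ∀ α : Λ, comp α (s α) = α
  s_r : ∀ α : Λ, s (r α) = r α
  r_r : ∀ α : Λ, r (r α) = r α
  r_s : ∀ α : Λ, r (s α) = s α
  s_s : ∀ α : Λ, s (s α) = s α
  left_cancel : ∀ {α β γ : Λ}, s α = r β → s α = r γ → comp α β = comp α γ → β = γ
  right_cancel : ∀ {β γ α : Λ}, s β = r α → s γ = r α → comp β α = comp γ α → β = γ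
  no_inverses : ∀ {α β : Λ}, s α = r β → comp α β = s β → α = s β ∧ β = s β

variable {Λ : Type u}

/-- The tail set `αΛ`. -/
def pTail (C : CategoryOfPaths Λ) (α : Λ) : Set Λ :=
  {x | ∃ β, C.s α = C.r β ∧ x = C.comp α β}

/-- `vΛ`, the paths with range `v`. -/
def pRng (C : CategoryOfPaths Λ) (w : Λ) : Set Λ := {α | C.r α = w}

/-- `Λv`, the paths with source `v`. -/
def pSrc (C : CategoryOfPaths Λ) (w : Λ) : Set Λ := {α | C.s α = w}

/-- `[β]`, the initial segments of `β`. -/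
def pSeg (C : CategoryOfPaths Λ) (β : Λ) : Set Λ := {α | β ∈ pTail C α}

/-- `α ⋔ β`. -/
def pMeets (C : CategoryOfPaths Λ) (α β : Λ) : Prop :=
  (pTail C α ∩ pTail C β).Nonempty

/-- `αE`. -/
def pMulSet (C : CategoryOfPaths Λ) (α : Λ) (E : Set Λ) : Set Λ :=
  {x | ∃ β ∈ E, C.s α = C.r β ∧ x = C.comp α β}

/-- `σ^α(E ∩ αΛ)`, computed inside an ambient subcategory `S`. -/
def pShiftIn (C : CategoryOfPaths Λ) (S : Set Λ) (α : Λ) (E : Set Λ) : Set Λ :=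
  {β | β ∈ S ∧ C.s α = C.r β ∧ C.comp α β ∈ E}

/-- `σ^α(E ∩ αΛ)`. -/
def pShift (C : CategoryOfPaths Λ) (α : Λ) (E : Set Λ) : Set Λ :=
  {β | C.s α = C.r β ∧ C.comp α β ∈ E}

/-- `⋁F`: the minimal common extensions of `F`. -/
def pMinExt (C : CategoryOfPaths Λ) (F : Set Λ) : Set Λ :=
  {ε | (∀ α ∈ F, ε ∈ pTail C α) ∧
    ∀ γ, (∀ α ∈ F, γ ∈ pTail C α) → ε ∈ pTail C γ → γ = ε}

/-- `α ∨ β`: the minimal common extensions of `α` and `β`. -/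
def pMinCE (C : CategoryOfPaths Λ) (α β : Λ) : Set Λ := pMinExt C {α, β}

/-- A subcategory of a category of paths, as a set of morphisms. -/
structure IsSubcategory (C : CategoryOfPaths Λ) (Λ₀ : Set Λ) : Prop where
  comp_mem : ∀ {α β : Λ}, α ∈ Λ₀ → β ∈ Λ₀ → C.s α = C.r β → C.comp α β ∈ Λ₀
  s_mem : ∀ {α : Λ}, α ∈ Λ₀ → C.s α ∈ Λ₀
  r_mem : ∀ {α : Λ}, α ∈ Λ₀ → C.r α ∈ Λ₀

/-- A finitely aligned category of paths. -/
def FinitelyAligned (C : CategoryOfPaths Λ) : Prop :=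
  ∀ α β : Λ, ∃ G : Set Λ, G.Finite ∧
    pTail C α ∩ pTail C β = ⋃ ε ∈ G, pTail C ε

/-- A finitely aligned relative category of paths `(Λ₀, Λ)`. -/
def RelFinitelyAligned (C : CategoryOfPaths Λ) (Λ₀ : Set Λ) : Prop :=
  (∀ α ∈ Λ₀, ∀ β ∈ Λ₀, ∃ G : Set Λ, G.Finite ∧ G ⊆ Λ₀ ∧
      pTail C α ∩ pTail C β = ⋃ ε ∈ G, pTail C ε) ∧
  (∀ α ∈ Λ₀, pTail C α ∩ Λ₀ = pMulSet C α Λ₀)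

/-- A ring of sets: contains `∅` and is closed under `∪`, `∩`, and `\`. -/
def IsSetRing {γ : Type v} (R : Set (Set γ)) : Prop :=
  ∅ ∈ R ∧ (∀ E ∈ R, ∀ F ∈ R, E ∪ F ∈ R) ∧ (∀ E ∈ R, ∀ F ∈ R, E ∩ F ∈ R) ∧
    (∀ E ∈ R, ∀ F ∈ R, E \ F ∈ R)

/-- A ring of sets on `S`: a ring of sets all of whose members are subsets of `S`. -/
def IsSetRingOn {γ : Type v} (S : Set γ) (R : Set (Set γ)) : Prop :=
  IsSetRing R ∧ ∀ E ∈ R, E ⊆ S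

/-- The ring of sets generated by a collection. -/
def setRingGen {γ : Type v} (G : Set (Set γ)) : Set (Set γ) :=
  ⋂₀ {R | IsSetRing R ∧ G ⊆ R}

/-- The ring of sets on `S` generated by a collection. -/
def setRingGenOn {γ : Type v} (S : Set γ) (G : Set (Set γ)) : Set (Set γ) :=
  ⋂₀ {R | IsSetRingOn S R ∧ G ⊆ R}

/-- A zigzag: a list of pairs `(αᵢ, βᵢ)` with `r αᵢ = r βᵢ` and `s αᵢ₊₁ = s βᵢ`. -/
def IsZigzag (C : CategoryOfPaths Λ) (l : List (Λ × Λ)) : Prop :=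
  (∀ p ∈ l, C.r p.1 = C.r p.2) ∧ l.Chain' (fun p q => C.s q.1 = C.s p.2)

/-- The (graph of the) zigzag map `φ_ζ = σ^{α₁} β₁ ⋯ σ^{αₙ} βₙ`, computed
inside an ambient subcategory `S`. -/
def zigzagRelIn (C : CategoryOfPaths Λ) (S : Set Λ) : List (Λ × Λ) → Λ → Λ → Prop
  | [], x, y => x = y ∧ x ∈ S
  | p :: rest, x, y => ∃ z, zigzagRelIn C S rest x z ∧ C.s p.2 = C.r z ∧
      C.s p.1 = C.r y ∧ y ∈ S ∧ C.comp p.2 z = C.comp p.1 y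

/-- `A(ζ)`: the domain of the zigzag map. -/
def zigzagDomIn (C : CategoryOfPaths Λ) (S : Set Λ) (l : List (Λ × Λ)) : Set Λ :=
  {x | ∃ y, zigzagRelIn C S l x y}

/-- `𝒟(Λ₀,Λ)⁰_v`: nonempty zigzag sets with entries in `Λ₀` and source `v`,
computed inside the ambient subcategory `S`. -/
def relD0 (C : CategoryOfPaths Λ) (Λ₀ S : Set Λ) (w : Λ) : Set (Set Λ) :=
  {E | E.Nonempty ∧ ∃ (l : List (Λ × Λ)) (h : l ≠ []),
    IsZigzag C l ∧ (∀ p ∈ l, p.1 ∈ Λ₀ ∧ p.2 ∈ Λ₀) ∧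
    C.s (l.getLast h).2 = w ∧ E = zigzagDomIn C S l}

/-- `𝒜(Λ₀,Λ)_v`: the ring of sets generated by the zigzag sets. -/
def relAring (C : CategoryOfPaths Λ) (Λ₀ S : Set Λ) (w : Λ) : Set (Set Λ) :=
  setRingGenOn {α | α ∈ S ∧ C.r α = w} (relD0 C Λ₀ S w)

/-- A filter in a ring of sets. -/
def IsFilterIn {γ : Type v} (R U : Set (Set γ)) : Prop :=
  U.Nonempty ∧ U ⊆ R ∧ (∀ E ∈ U, E.Nonempty) ∧
    (∀ E ∈ U, ∀ F ∈ U, E ∩ F ∈ U) ∧ (∀ E ∈ U, ∀ F ∈ R, E ⊆ F → F ∈ U)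

/-- An ultrafilter in a ring of sets: a maximal filter. -/
def IsUltrafilterIn {γ : Type v} (R U : Set (Set γ)) : Prop :=
  IsFilterIn R U ∧ ∀ V, IsFilterIn R V → U ⊆ V → V = U

/-- A filter base in a ring of sets. -/
def IsFilterBaseIn {γ : Type v} (R B : Set (Set γ)) : Prop :=
  B.Nonempty ∧ B ⊆ R ∧ (∀ E ∈ B, E.Nonempty) ∧
    ∀ E ∈ B, ∀ F ∈ B, ∃ G ∈ B, G ⊆ E ∩ F

/-- The filter generated by a filter base. -/
def filterGenBy {γ : Type v} (R B : Set (Set γ)) : Set (Set γ) :=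
  {E | E ∈ R ∧ ∃ F ∈ B, F ⊆ E}

/-- An ultrafilter base in a ring of sets. -/
def IsUltrafilterBaseIn {γ : Type v} (R B : Set (Set γ)) : Prop :=
  IsFilterBaseIn R B ∧ IsUltrafilterIn R (filterGenBy R B)

/-- A Boolean ring homomorphism defined on a ring of sets `A` with values in a
generalized Boolean algebra. -/
def IsBRHomOn {γ : Type v} {R : Type*} [GeneralizedBooleanAlgebra R]
    (A : Set (Set γ)) (ν : Set γ → R) : Prop :=
  ν ∅ = ⊥ ∧ (∀ E ∈ A, ∀ F ∈ A, ν (E ∪ F) = ν E ⊔ ν F) ∧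
    (∀ E ∈ A, ∀ F ∈ A, ν (E ∩ F) = ν E ⊓ ν F) ∧
    (∀ E ∈ A, ∀ F ∈ A, ν (E \ F) = ν E \ ν F)

/-- `𝒜_v`: the ring of sets on `vΛ` generated by the tail sets. -/
def tailRing (C : CategoryOfPaths Λ) (w : Λ) : Set (Set Λ) :=
  setRingGenOn (pRng C w) {E | ∃ α, C.r α = w ∧ E = pTail C α}

/-- A directed subset. -/
def pDirected (C : CategoryOfPaths Λ) (x : Set Λ) : Prop :=
  ∀ α ∈ x, ∀ β ∈ x, (pTail C α ∩ pTail C β ∩ x).Nonempty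

/-- A hereditary subset. -/
def pHereditary (C : CategoryOfPaths Λ) (x : Set Λ) : Prop :=
  ∀ γ ∈ x, ∀ α : Λ, γ ∈ pTail C α → α ∈ x

/-- `vΛ*`: the nonempty directed hereditary subsets of `vΛ`. -/
def lamStar (C : CategoryOfPaths Λ) (w : Λ) : Set (Set Λ) :=
  {x | x.Nonempty ∧ x ⊆ pRng C w ∧ pDirected C x ∧ pHereditary C x}

/-- `vΛ**`: the maximal directed subsets of `vΛ`. -/
def lamStarStar (C : CategoryOfPaths Λ) (w : Λ) : Set (Set Λ) :=
  {x | x ⊆ pRng C w ∧ pDirected C x ∧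
    ∀ y, y ⊆ pRng C w → pDirected C y → x ⊆ y → y = x}

/-- `αx = ⋃_{γ ∈ x} [αγ]` for `x ∈ s(α)Λ*`. -/
def pMulStar (C : CategoryOfPaths Λ) (α : Λ) (x : Set Λ) : Set Λ :=
  {δ | ∃ γ ∈ x, C.s α = C.r γ ∧ C.comp α γ ∈ pTail C δ}

/-- `𝒰_{C,0}`. -/
def UC0 (C : CategoryOfPaths Λ) (w : Λ) (x : Set Λ) : Set (Set Λ) :=
  {E | E ∈ tailRing C w ∧ ∃ α ∈ x, pTail C α ⊆ E}

/-- `𝒰_C`. -/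
def UC (C : CategoryOfPaths Λ) (w : Λ) (x : Set Λ) : Set (Set Λ) :=
  {E | E ∈ tailRing C w ∧ ∃ α ∈ x, x ∩ pTail C α ⊆ E}

/-- `X_v = vΛ*` as a type. -/
abbrev Xv (C : CategoryOfPaths Λ) (w : Λ) : Type u := {x : Set Λ // x ∈ lamStar C w}

/-- The topology on `X_v` generated by the sets `Ê`, `E ∈ 𝒜_v`. -/
def XvTop (C : CategoryOfPaths Λ) (w : Λ) : TopologicalSpace (Xv C w) :=
  TopologicalSpace.generateFrom
    {t | ∃ E ∈ tailRing C w, t = {x : Xv C w | E ∈ UC C w x.1}}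

/-- The vertices of `Λ`. -/
abbrev Vertex (C : CategoryOfPaths Λ) : Type u := {w : Λ // C.r w = w}

/-- `X`: the disjoint union of the spaces `X_v`. -/
abbrev Xtotal (C : CategoryOfPaths Λ) : Type u := Σ w : Vertex C, Xv C w.1

/-- The disjoint union topology on `X`. -/
def XtotalTop (C : CategoryOfPaths Λ) : TopologicalSpace (Xtotal C) :=
  letI : ∀ w : Vertex C, TopologicalSpace (Xv C w.1) := fun w => XvTop C w.1
  inferInstance

/-- The boundary `∂Λ`: the closure of `Λ**` in `X`. -/
def boundarySet (C : CategoryOfPaths Λ) : Set (Xtotal C) :=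
  @closure _ (XtotalTop C) {p : Xtotal C | p.2.1 ∈ lamStarStar C p.1.1}

/-- An exhaustive subset of `vΛ`. -/
def ExhaustiveAt (C : CategoryOfPaths Λ) (w : Λ) (F : Set Λ) : Prop :=
  ∀ α, C.r α = w → ∃ β ∈ F, pMeets C α β

/-- An aperiodic point of `Λ*`. -/
def pAperiodic (C : CategoryOfPaths Λ) (x : Set Λ) : Prop :=
  ∀ α ∈ x, ∀ β ∈ x, α ≠ β → pShift C α x ≠ pShift C β x

/-- A right-aperiodic point of `wΛ*`. -/
def pRightAperiodicAt (C : CategoryOfPaths Λ) (w : Λ) (x : Set Λ) : Prop :=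
  ∀ α β : Λ, C.s α = w → C.s β = w → α ≠ β → pMulStar C α x ≠ pMulStar C β x

/-- The triples `(α, β, x)` with `s α = s β` and `x ∈ s(α)Λ*`. -/
abbrev pTrip (C : CategoryOfPaths Λ) : Type u :=
  {t : Λ × Λ × Set Λ // C.s t.1 = C.s t.2.1 ∧ t.2.2 ∈ lamStar C (C.s t.1)}

/-- The groupoid equivalence relation on triples. -/
def tripRel (C : CategoryOfPaths Λ) (t t' : pTrip C) : Prop :=
  ∃ (z : Set Λ) (δ δ' : Λ),
    z ∈ lamStar C (C.s δ) ∧ z ∈ lamStar C (C.s δ') ∧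
    C.s t.1.1 = C.r δ ∧ C.s t'.1.1 = C.r δ' ∧
    t.1.2.2 = pMulStar C δ z ∧ t'.1.2.2 = pMulStar C δ' z ∧
    C.comp t.1.1 δ = C.comp t'.1.1 δ' ∧
    C.comp t.1.2.1 δ = C.comp t'.1.2.1 δ'

/-- The ultrafilter space of `𝒜(Λ₀,Λ)_v`. -/
abbrev relXv (C : CategoryOfPaths Λ) (Λ₀ : Set Λ) (w : Λ) : Type u :=
  {U : Set (Set Λ) // IsUltrafilterIn (relAring C Λ₀ Set.univ w) U}

/-- The topology on the ultrafilter space of `𝒜(Λ₀,Λ)_v` generated by the `Ê`. -/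
def relXvTop (C : CategoryOfPaths Λ) (Λ₀ : Set Λ) (w : Λ) :
    TopologicalSpace (relXv C Λ₀ w) :=
  TopologicalSpace.generateFrom
    {t | ∃ E ∈ relAring C Λ₀ Set.univ w, t = {U : relXv C Λ₀ w | E ∈ U.1}}

/-!
Periodicity makes the two products of a maximal directed set `y ∈ s(α)Λ**` agree. Given
`γ ∈ y`, finite alignment writes `αγΛ ∩ βγΛ` as finitely many tails; their quotients by `αγ`
form a finite exhaustive set at `s(γ)`, and in a countable finitely aligned category a maximal
directed set meets every finite exhaustive set (follow a cofinal sequence and extend along it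
by pigeonhole). Applied to the shift `σ^γ y`, this puts an element of `αy` below every element
of `βy`, so `αy ∪ βy` is directed; both products are maximal, hence equal. A boundary point `x`
is approximated by maximal points in each basic neighbourhood `Ê`: if `δ ∈ αx \ βx`, the
neighbourhood `γΛ \ σ^β(δΛ)` of `x` contains a maximal `y`, yet `δ ∈ αy = βy` makes `y` meet
`σ^β(δΛ)`.
Conversely, a maximal directed set `m ∋ γ` lies in `∂Λ`, and `αγ ∈ αm = βm` provides a common
extension of `αγ` and `βγ`.
-/

theorem exists_forall_of_antitone {ι : Type*} {H : Set ι} (hH : H.Finite) {P : ι → ℕ → Prop}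
    (hP : ∀ c, Antitone (P c)) (h : ∀ k, ∃ c ∈ H, P c k) : ∃ c ∈ H, ∀ k, P c k := by
  by_contra! hcon
  have hev : ∀ᶠ k in Filter.atTop, ∀ c ∈ H, ¬P c k :=
    (Filter.eventually_all_finite hH).2 fun c hc => by
      obtain ⟨k, hk⟩ := hcon c hc
      exact Filter.eventually_atTop.2 ⟨k, fun j hj hPj => hk (hP c hj hPj)⟩
  obtain ⟨k, hk⟩ := hev.exists
  obtain ⟨c, hc, hPc⟩ := h k
  exact hk c hc hPc

namespace CategoryOfPaths

variable {C : CategoryOfPaths Λ}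

section Tails

lemma mem_pTail_comp {α β : Λ} (h : C.s α = C.r β) : C.comp α β ∈ pTail C α :=
  ⟨β, h, rfl⟩

variable (C) in
lemma mem_pTail_self (α : Λ) : α ∈ pTail C α :=
  ⟨C.s α, (C.r_s α).symm, (C.comp_id α).symm⟩

lemma r_eq_of_mem_pTail {ξ α : Λ} (h : ξ ∈ pTail C α) : C.r ξ = C.r α := by
  obtain ⟨β, hβ, rfl⟩ := h
  exact C.r_comp hβ

lemma pTail_trans {γ β α : Λ} (h₁ : β ∈ pTail C α) (h₂ : γ ∈ pTail C β) :
    γ ∈ pTail C α := by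
  obtain ⟨ρ, hρ, rfl⟩ := h₁
  obtain ⟨σ, hσ, rfl⟩ := h₂
  rw [C.s_comp hρ] at hσ
  exact ⟨C.comp ρ σ, by rw [C.r_comp hσ, hρ], C.comp_assoc hρ hσ⟩

lemma pTail_subset {β α : Λ} (h : β ∈ pTail C α) : pTail C β ⊆ pTail C α :=
  fun _ => pTail_trans h

lemma comp_mem_pTail_comp {α γ ξ : Λ} (h : C.s α = C.r γ) (hξ : ξ ∈ pTail C γ) :
    C.comp α ξ ∈ pTail C (C.comp α γ) := by
  obtain ⟨ρ, hρ, rfl⟩ := hξ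
  rw [← C.comp_assoc h hρ]
  exact mem_pTail_comp (by rw [C.s_comp h, hρ])

lemma exists_eq_comp_of_mem_pTail_comp {α γ ζ : Λ} (h : C.s α = C.r γ)
    (hζ : ζ ∈ pTail C (C.comp α γ)) :
    ∃ η ∈ pTail C γ, C.s α = C.r η ∧ ζ = C.comp α η := by
  obtain ⟨κ, hκ, rfl⟩ := hζ
  rw [C.s_comp h] at hκ
  exact ⟨C.comp γ κ, mem_pTail_comp hκ, by rw [C.r_comp hκ, h], C.comp_assoc h hκ⟩

lemma pMeets_of_mem_pTail {γ α β : Λ} (h : pMeets C γ α) (hα : α ∈ pTail C β) :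
    pMeets C γ β :=
  h.mono (Set.inter_subset_inter_right _ (pTail_subset hα))

lemma pMeets_symm {α β : Λ} (h : pMeets C α β) : pMeets C β α := by
  rwa [pMeets, Set.inter_comm]

lemma mem_pShift_pTail_of_mem_pTail {β δ η ξ : Λ} (hη : η ∈ pShift C β (pTail C δ))
    (hξ : ξ ∈ pTail C η) : ξ ∈ pShift C β (pTail C δ) :=
  ⟨hη.1.trans (r_eq_of_mem_pTail hξ).symm, pTail_trans hη.2 (comp_mem_pTail_comp hη.1 hξ)⟩

protected lemma _root_.Set.Finite.pShift {β : Λ} {G : Set Λ} (hG : G.Finite) :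
    (pShift C β G).Finite :=
  Set.Finite.of_finite_image (hG.subset (Set.image_subset_iff.2 fun _ hd => hd.2))
    fun _ hd _ hd' h => C.left_cancel hd.1 hd'.1 h

lemma pShift_pTail_eq_biUnion {β δ : Λ} {G : Set Λ}
    (hG : pTail C β ∩ pTail C δ = ⋃ ε ∈ G, pTail C ε) :
    pShift C β (pTail C δ) = ⋃ d ∈ pShift C β G, pTail C d := by
  have hGsub : ∀ ε ∈ G, ε ∈ pTail C β ∩ pTail C δ := fun ε hε =>
    hG ▸ Set.mem_biUnion hε (mem_pTail_self C ε)
  ext η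
  simp only [Set.mem_iUnion₂]
  constructor
  · rintro ⟨hη, hβη⟩
    have : C.comp β η ∈ ⋃ ε ∈ G, pTail C ε := hG ▸ ⟨mem_pTail_comp hη, hβη⟩
    obtain ⟨ε, hεG, hβηε⟩ := Set.mem_iUnion₂.1 this
    obtain ⟨d, hd, rfl⟩ := (hGsub _ hεG).1
    obtain ⟨η', hη', hrη', hη'eq⟩ := exists_eq_comp_of_mem_pTail_comp hd hβηε
    exact ⟨d, ⟨hd, hεG⟩, C.left_cancel hη hrη' hη'eq ▸ hη'⟩
  · rintro ⟨d, ⟨hd, hdG⟩, hηd⟩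
    exact mem_pShift_pTail_of_mem_pTail ⟨hd, (hGsub _ hdG).2⟩ hηd

end Tails

section Directed

lemma exists_mem_of_pDirected {y : Set Λ} (h : pDirected C y) {a b : Λ} (ha : a ∈ y)
    (hb : b ∈ y) : ∃ w ∈ y, w ∈ pTail C a ∧ w ∈ pTail C b := by
  obtain ⟨w, ⟨hwa, hwb⟩, hw⟩ := h a ha b hb
  exact ⟨w, hw, hwa, hwb⟩

lemma pDirected_of_cofinal {D T : Set Λ} (hD : pDirected C D) (hDT : D ⊆ T)
    (hcof : ∀ a ∈ T, ∃ w ∈ D, w ∈ pTail C a) : pDirected C T := by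
  intro a ha b hb
  obtain ⟨wa, hwa, hwaa⟩ := hcof a ha
  obtain ⟨wb, hwb, hwbb⟩ := hcof b hb
  obtain ⟨w, hw, hwwa, hwwb⟩ := exists_mem_of_pDirected hD hwa hwb
  exact ⟨w, ⟨pTail_trans hwaa hwwa, pTail_trans hwbb hwwb⟩, hDT hw⟩

lemma pDirected_sUnion {c : Set (Set Λ)} (hc : IsChain (· ⊆ ·) c)
    (h : ∀ z ∈ c, pDirected C z) : pDirected C (⋃₀ c) := by
  rintro a ⟨z₁, hz₁, ha⟩ b ⟨z₂, hz₂, hb⟩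
  have key : ∀ {z}, z ∈ c → a ∈ z → b ∈ z → (pTail C a ∩ pTail C b ∩ ⋃₀ c).Nonempty :=
    fun hz ha hb => (h _ hz a ha b hb).mono
      (Set.inter_subset_inter_right _ (Set.subset_sUnion_of_mem hz))
  rcases hc.total hz₁ hz₂ with h₁₂ | h₂₁
  · exact key hz₂ (h₁₂ ha) hb
  · exact key hz₁ ha (h₂₁ hb)

lemma pDirected_pShift {α : Λ} {z : Set Λ} (hz : pDirected C z) :
    pDirected C (pShift C α z) := by
  rintro a ⟨ha, haz⟩ b ⟨hb, hbz⟩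
  obtain ⟨ζ, hζ, hζa, hζb⟩ := exists_mem_of_pDirected hz haz hbz
  obtain ⟨η, hηa, hη, rfl⟩ := exists_eq_comp_of_mem_pTail_comp ha hζa
  obtain ⟨η', hη'b, hη', hηη'⟩ := exists_eq_comp_of_mem_pTail_comp hb hζb
  cases C.left_cancel hη hη' hηη'
  exact ⟨η, ⟨hηa, hη'b⟩, hη, hζ⟩

variable (C) in
lemma pDirected_singleton (γ : Λ) : pDirected C {γ} := by
  rintro a (rfl : a = γ) b (rfl : b = a)
  exact ⟨b, ⟨mem_pTail_self C b, mem_pTail_self C b⟩, rfl⟩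

lemma pMulStar_subset_pRng {α : Λ} {y : Set Λ} : pMulStar C α y ⊆ pRng C (C.r α) := by
  rintro δ ⟨γ, -, hγ, hαγδ⟩
  exact (r_eq_of_mem_pTail hαγδ).symm.trans (C.r_comp hγ)

lemma comp_mem_pMulStar {α γ : Λ} {y : Set Λ} (hγy : γ ∈ y) (hγ : C.s α = C.r γ) :
    C.comp α γ ∈ pMulStar C α y :=
  ⟨γ, hγy, hγ, mem_pTail_self C _⟩

lemma pDirected_pMulStar {α : Λ} {y : Set Λ} (hy : pDirected C y)
    (hyα : y ⊆ pRng C (C.s α)) : pDirected C (pMulStar C α y) := by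
  rintro δ ⟨γ₁, hγ₁, h₁, hδ⟩ δ' ⟨γ₂, hγ₂, h₂, hδ'⟩
  obtain ⟨ξ, hξ, hξ₁, hξ₂⟩ := exists_mem_of_pDirected hy hγ₁ hγ₂
  exact ⟨C.comp α ξ, ⟨pTail_trans hδ (comp_mem_pTail_comp h₁ hξ₁),
    pTail_trans hδ' (comp_mem_pTail_comp h₂ hξ₂)⟩, comp_mem_pMulStar hξ (hyα hξ).symm⟩

end Directed

section Maximal

lemma subset_of_pDirected_union {u : Λ} {z S : Set Λ} (hz : z ∈ lamStarStar C u)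
    (hS : S ⊆ pRng C u) (hdir : pDirected C (z ∪ S)) : S ⊆ z :=
  Set.union_eq_left.1 (hz.2.2 _ (Set.union_subset hz.1 hS) hdir Set.subset_union_left)

lemma pHereditary_of_mem_lamStarStar {u : Λ} {y : Set Λ} (hy : y ∈ lamStarStar C u) :
    pHereditary C y := by
  intro δ hδ δ₀ hδδ₀
  have hdir : pDirected C (y ∪ {δ₀}) := by
    refine pDirected_of_cofinal hy.2.1 Set.subset_union_left ?_
    rintro a (ha | rfl)
    · exact ⟨a, ha, mem_pTail_self C a⟩
    · exact ⟨δ, hδ, hδδ₀⟩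
  have hδ₀ : {δ₀} ⊆ pRng C u := Set.singleton_subset_iff.2
    ((r_eq_of_mem_pTail hδδ₀).symm.trans (hy.1 hδ))
  exact subset_of_pDirected_union hy hδ₀ hdir rfl

lemma nonempty_of_mem_lamStarStar {u : Λ} (hu : C.r u = u) {y : Set Λ}
    (hy : y ∈ lamStarStar C u) : y.Nonempty := by
  by_contra hne
  rw [Set.not_nonempty_iff_eq_empty] at hne
  have := hy.2.2 {u} (Set.singleton_subset_iff.2 hu) (pDirected_singleton C u)
    (hne ▸ Set.empty_subset _)
  exact (Set.singleton_nonempty u).ne_empty (this.trans hne)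

lemma lamStarStar_subset_lamStar {u : Λ} (hu : C.r u = u) :
    lamStarStar C u ⊆ lamStar C u :=
  fun _ hy => ⟨nonempty_of_mem_lamStarStar hu hy, hy.1, hy.2.1,
    pHereditary_of_mem_lamStarStar hy⟩

lemma exists_mem_lamStarStar {u γ : Λ} (hγ : C.r γ = u) : ∃ m ∈ lamStarStar C u, γ ∈ m := by
  let P : Set (Set Λ) := {z | z ⊆ pRng C u ∧ pDirected C z ∧ γ ∈ z}
  have hγP : {γ} ∈ P := ⟨Set.singleton_subset_iff.2 hγ, pDirected_singleton C γ, rfl⟩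
  obtain ⟨m, -, hm⟩ := zorn_subset_nonempty P (fun c hcP hc ⟨z, hz⟩ =>
    ⟨⋃₀ c, ⟨Set.sUnion_subset fun z hz => (hcP hz).1,
      pDirected_sUnion hc fun z hz => (hcP hz).2.1, Set.subset_sUnion_of_mem hz (hcP hz).2.2⟩,
      fun _ => Set.subset_sUnion_of_mem⟩) _ hγP
  refine ⟨m, ⟨hm.prop.1, hm.prop.2.1, fun y hy hydir hmy => ?_⟩, hm.prop.2.2⟩
  exact (hm.2 ⟨hy, hydir, hmy hm.prop.2.2⟩ hmy).antisymm hmy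

lemma pShift_mem_lamStarStar {v γ : Λ} {y : Set Λ} (hy : y ∈ lamStarStar C v) (hγ : γ ∈ y) :
    pShift C γ y ∈ lamStarStar C (C.s γ) := by
  refine ⟨fun ε hε => hε.1.symm, pDirected_pShift hy.2.1, fun z hz hzdir hyz => ?_⟩
  have hγv : C.r γ = v := hy.1 hγ
  have hdir : pDirected C (y ∪ pMulStar C γ z) := by
    refine pDirected_of_cofinal (pDirected_pMulStar hzdir hz) Set.subset_union_right ?_
    rintro a (ha | ha)
    · obtain ⟨ξ, hξy, hξa, κ, hκ, rfl⟩ := exists_mem_of_pDirected hy.2.1 ha hγ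
      exact ⟨C.comp γ κ, comp_mem_pMulStar (hyz ⟨hκ, hξy⟩) hκ, hξa⟩
    · exact ⟨a, ha, mem_pTail_self C a⟩
  have hzy := subset_of_pDirected_union hy (hγv ▸ pMulStar_subset_pRng) hdir
  exact Set.Subset.antisymm
    (fun ε hε => ⟨(hz hε).symm, hzy (comp_mem_pMulStar hε (hz hε).symm)⟩) hyz

lemma pMulStar_mem_lamStarStar {α : Λ} {y : Set Λ} (hy : y ∈ lamStarStar C (C.s α)) :
    pMulStar C α y ∈ lamStarStar C (C.r α) := by
  refine ⟨pMulStar_subset_pRng, pDirected_pMulStar hy.2.1 hy.1, fun z hz hzdir hyz => ?_⟩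
  have hy_shift : y ⊆ pShift C α z := fun a ha =>
    ⟨(hy.1 ha).symm, hyz (comp_mem_pMulStar ha (hy.1 ha).symm)⟩
  have hshift : pShift C α z = y :=
    hy.2.2 _ (fun _ hε => hε.1.symm) (pDirected_pShift hzdir) hy_shift
  refine Set.Subset.antisymm (fun ρ hρ => ?_) hyz
  obtain ⟨a, ha⟩ := nonempty_of_mem_lamStarStar (C.r_s α) hy
  obtain ⟨ζ, hζ, hζρ, hζa⟩ :=
    exists_mem_of_pDirected hzdir hρ (hyz (comp_mem_pMulStar ha (hy.1 ha).symm))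
  obtain ⟨η, -, hη, rfl⟩ := exists_eq_comp_of_mem_pTail_comp (hy.1 ha).symm hζa
  exact ⟨η, hshift ▸ ⟨hη, hζ⟩, hη, hζρ⟩

end Maximal

section Countable

lemma exists_antitone_cofinal_seq [Countable Λ] {z : Set Λ} (hz : pDirected C z)
    (hne : z.Nonempty) : ∃ e : ℕ → Λ, (∀ k, e k ∈ z) ∧ Antitone (fun k => pTail C (e k)) ∧
      ∀ b ∈ z, ∃ k, e k ∈ pTail C b := by
  have : Encodable z := Encodable.ofCountable z
  have : Inhabited z := ⟨⟨_, hne.some_mem⟩⟩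
  have hdir : Directed (fun a b : Λ => b ∈ pTail C a) (Subtype.val : z → Λ) := fun a b => by
    obtain ⟨w, hw, hwa, hwb⟩ := exists_mem_of_pDirected hz a.2 b.2
    exact ⟨⟨w, hw⟩, hwa, hwb⟩
  exact ⟨fun k => (hdir.sequence _ k).1, fun k => (hdir.sequence _ k).2,
    antitone_nat_of_succ_le fun k => pTail_subset (hdir.sequence_mono_nat k),
    fun b hb => ⟨_, hdir.rel_sequence ⟨b, hb⟩⟩⟩

lemma forall_mem_of_antitone_of_mem_pTail {u : Λ} {z : Set Λ} (hz : z ∈ lamStarStar C u)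
    {e : ℕ → Λ} (hez : ∀ k, e k ∈ z) (hcof : ∀ b ∈ z, ∃ k, e k ∈ pTail C b) {t : ℕ → Λ}
    (hte : ∀ k, t k ∈ pTail C (e k)) (ht : Antitone fun k => pTail C (t k)) (k : ℕ) :
    t k ∈ z := by
  have hdir : pDirected C (z ∪ Set.range t) := by
    refine pDirected_of_cofinal (D := Set.range t) ?_ Set.subset_union_right ?_
    · rintro _ ⟨i, rfl⟩ _ ⟨j, rfl⟩
      exact ⟨t (max i j), ⟨ht (le_max_left i j) (mem_pTail_self C _),
        ht (le_max_right i j) (mem_pTail_self C _)⟩, Set.mem_range_self _⟩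
    · rintro a (ha | ha)
      · obtain ⟨j, hj⟩ := hcof a ha
        exact ⟨t j, Set.mem_range_self j, pTail_trans hj (hte j)⟩
      · exact ⟨a, ha, mem_pTail_self C a⟩
  refine subset_of_pDirected_union hz ?_ hdir (Set.mem_range_self k)
  rintro _ ⟨j, rfl⟩
  exact (r_eq_of_mem_pTail (hte j)).trans (hz.1 (hez j))

variable {e : ℕ → Λ} (he : Antitone fun k => pTail C (e k))
include he

lemma exists_mem_pTail_inter_forall_pMeets (hfa : FinitelyAligned C) {τ : Λ}
    (hτ : ∀ k, pMeets C τ (e k)) (m : ℕ) :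
    ∃ σ ∈ pTail C τ ∩ pTail C (e m), ∀ k, pMeets C σ (e k) := by
  obtain ⟨G, hGfin, hG⟩ := hfa τ (e m)
  obtain ⟨σ, hσG, hσ⟩ := exists_forall_of_antitone (P := fun σ k => pMeets C σ (e k)) hGfin
    (fun σ j k hjk hσk => pMeets_of_mem_pTail hσk (he hjk (mem_pTail_self C (e k))))
    fun k => by
      obtain ⟨w, hwτ, hwk⟩ := hτ (max m k)
      have : w ∈ ⋃ σ ∈ G, pTail C σ := hG ▸ ⟨hwτ, he (le_max_left m k) hwk⟩
      obtain ⟨σ, hσG, hwσ⟩ := Set.mem_iUnion₂.1 this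
      exact ⟨σ, hσG, w, hwσ, he (le_max_right m k) hwk⟩
  exact ⟨σ, hG ▸ Set.mem_biUnion hσG (mem_pTail_self C σ), hσ⟩

lemma exists_antitone_seq_mem_pTail (hfa : FinitelyAligned C) {c : Λ}
    (hc : ∀ k, pMeets C c (e k)) : ∃ t : ℕ → Λ, t 0 ∈ pTail C c ∧
      (∀ k, t k ∈ pTail C (e k)) ∧ Antitone fun k => pTail C (t k) := by
  let MeetsAll := {τ : Λ // ∀ k, pMeets C τ (e k)}
  choose σ hσ hσmeets using fun (τ : MeetsAll) (m : ℕ) =>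
    exists_mem_pTail_inter_forall_pMeets he hfa τ.2 m
  let t' : ℕ → MeetsAll := fun n =>
    Nat.rec ⟨σ ⟨c, hc⟩ 0, hσmeets _ 0⟩ (fun k τ => ⟨σ τ (k + 1), hσmeets τ (k + 1)⟩) n
  refine ⟨fun k => (t' k).1, (hσ ⟨c, hc⟩ 0).1, fun k => ?_,
    antitone_nat_of_succ_le fun k => pTail_subset (hσ (t' k) (k + 1)).1⟩
  cases k with
  | zero => exact (hσ ⟨c, hc⟩ 0).2
  | succ k => exact (hσ (t' k) (k + 1)).2

lemma mem_of_forall_pMeets (hfa : FinitelyAligned C) {u : Λ} {z : Set Λ}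
    (hz : z ∈ lamStarStar C u) (hez : ∀ k, e k ∈ z) (hcof : ∀ b ∈ z, ∃ k, e k ∈ pTail C b)
    {c : Λ} (hc : ∀ k, pMeets C c (e k)) : c ∈ z := by
  obtain ⟨t, ht0, hte, ht⟩ := exists_antitone_seq_mem_pTail he hfa hc
  exact pHereditary_of_mem_lamStarStar hz _
    (forall_mem_of_antitone_of_mem_pTail hz hez hcof hte ht 0) c ht0

omit he

/-- The one place where countability of `Λ` enters. -/
lemma exists_mem_of_exhaustiveAt [Countable Λ] (hfa : FinitelyAligned C) {u : Λ}
    (hu : C.r u = u) {z : Set Λ} (hz : z ∈ lamStarStar C u) {G : Set Λ} (hG : G.Finite)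
    (hexh : ExhaustiveAt C u G) : ∃ c ∈ G, c ∈ z := by
  obtain ⟨e, hez, he, hcof⟩ :=
    exists_antitone_cofinal_seq hz.2.1 (nonempty_of_mem_lamStarStar hu hz)
  obtain ⟨c, hcG, hc⟩ := exists_forall_of_antitone (P := fun c k => pMeets C c (e k)) hG
    (fun c j k hjk hck => pMeets_of_mem_pTail hck (he hjk (mem_pTail_self C (e k))))
    fun k => by
      obtain ⟨c, hcG, hkc⟩ := hexh (e k) (hz.1 (hez k))
      exact ⟨c, hcG, pMeets_symm hkc⟩
  exact ⟨c, hcG, mem_of_forall_pMeets he hfa hz hez hcof hc⟩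

end Countable

section Periodicity

def HasPeriodicity (C : CategoryOfPaths Λ) (α β : Λ) : Prop :=
  ∀ γ, C.s α = C.r γ → pMeets C (C.comp α γ) (C.comp β γ)

lemma ExhaustiveAt.of_subset_biUnion {w : Λ} {S H : Set Λ} (hS : ExhaustiveAt C w S)
    (hSH : S ⊆ ⋃ h ∈ H, pTail C h) : ExhaustiveAt C w H := by
  intro ρ hρ
  obtain ⟨η, hηS, hρη⟩ := hS ρ hρ
  obtain ⟨h, hH, hηh⟩ := Set.mem_iUnion₂.1 (hSH hηS)
  exact ⟨h, hH, pMeets_of_mem_pTail hρη hηh⟩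

variable {α β : Λ}

lemma HasPeriodicity.symm (hper : HasPeriodicity C α β) (hs : C.s α = C.s β) :
    HasPeriodicity C β α :=
  fun γ hγ => pMeets_symm (hper γ (hs.trans hγ))

lemma HasPeriodicity.exhaustiveAt (hper : HasPeriodicity C α β) (hs : C.s α = C.s β)
    {γ : Λ} (hγ : C.s α = C.r γ) :
    ExhaustiveAt C (C.s γ) (pShift C (C.comp α γ) (pTail C (C.comp β γ))) := by
  intro ρ hρ
  have hαγρ : C.s α = C.r (C.comp γ ρ) := by rw [C.r_comp hρ.symm, hγ]
  obtain ⟨τ, hτα, hτβ⟩ := hper (C.comp γ ρ) hαγρ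
  rw [← C.comp_assoc hγ hρ.symm] at hτα
  rw [← C.comp_assoc (hs ▸ hγ) hρ.symm] at hτβ
  have hαγ : C.s (C.comp α γ) = C.r ρ := by rw [C.s_comp hγ, hρ]
  obtain ⟨η, hηρ, hη, rfl⟩ := exists_eq_comp_of_mem_pTail_comp hαγ hτα
  exact ⟨η, ⟨hη, pTail_trans (mem_pTail_comp (by rw [C.s_comp (hs ▸ hγ), hρ])) hτβ⟩,
    η, hηρ, mem_pTail_self C η⟩

lemma HasPeriodicity.exists_comp_mem_pTail [Countable Λ] (hfa : FinitelyAligned C)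
    (hper : HasPeriodicity C α β) (hs : C.s α = C.s β) {y : Set Λ}
    (hy : y ∈ lamStarStar C (C.s α)) {γ : Λ} (hγy : γ ∈ y) :
    ∃ ξ ∈ y, C.comp α ξ ∈ pTail C (C.comp β γ) := by
  have hγ : C.s α = C.r γ := (hy.1 hγy).symm
  obtain ⟨G, hGfin, hG⟩ := hfa (C.comp α γ) (C.comp β γ)
  have hS := pShift_pTail_eq_biUnion hG
  obtain ⟨h, hhG, hh, hγhy⟩ := exists_mem_of_exhaustiveAt hfa (C.r_s γ)
    (pShift_mem_lamStarStar hy hγy) hGfin.pShift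
    (ExhaustiveAt.of_subset_biUnion (hper.exhaustiveAt hs hγ) hS.subset)
  have hhS : h ∈ pShift C (C.comp α γ) (pTail C (C.comp β γ)) :=
    hS ▸ Set.mem_biUnion hhG (mem_pTail_self C h)
  exact ⟨C.comp γ h, hγhy, C.comp_assoc hγ hh ▸ hhS.2⟩

lemma HasPeriodicity.pMulStar_eq [Countable Λ] (hfa : FinitelyAligned C)
    (hper : HasPeriodicity C α β) (hs : C.s α = C.s β) (hr : C.r α = C.r β) {y : Set Λ}
    (hy : y ∈ lamStarStar C (C.s α)) : pMulStar C α y = pMulStar C β y := by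
  have hαy := pMulStar_mem_lamStarStar hy
  have hβy : pMulStar C β y ∈ lamStarStar C (C.r α) :=
    hr ▸ pMulStar_mem_lamStarStar (hs ▸ hy)
  have hdir : pDirected C (pMulStar C α y ∪ pMulStar C β y) := by
    refine pDirected_of_cofinal hαy.2.1 Set.subset_union_left ?_
    rintro δ (hδ | ⟨γ, hγy, -, hβγδ⟩)
    · exact ⟨δ, hδ, mem_pTail_self C δ⟩
    · obtain ⟨ξ, hξy, hαξ⟩ := hper.exists_comp_mem_pTail hfa hs hy hγy
      exact ⟨C.comp α ξ, comp_mem_pMulStar hξy (hy.1 hξy).symm, pTail_trans hβγδ hαξ⟩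
  exact (subset_of_pDirected_union hβy hαy.1 (Set.union_comm _ _ ▸ hdir)).antisymm
    (subset_of_pDirected_union hαy hβy.1 hdir)

lemma hasPeriodicity_of_forall_pMulStar_eq (hs : C.s α = C.s β)
    (h : ∀ m ∈ lamStarStar C (C.s α), pMulStar C α m = pMulStar C β m) :
    HasPeriodicity C α β := by
  intro γ hγ
  obtain ⟨m, hm, hγm⟩ := exists_mem_lamStarStar hγ.symm
  obtain ⟨γ', hγ'm, hγ', hβγ'⟩ := h m hm ▸ comp_mem_pMulStar hγm hγ
  obtain ⟨ξ, -, hξγ, hξγ'⟩ := exists_mem_of_pDirected hm.2.1 hγm hγ'm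
  exact ⟨C.comp β ξ, pTail_trans hβγ' (comp_mem_pTail_comp hγ' hξγ'),
    comp_mem_pTail_comp (hs ▸ hγ) hξγ⟩

end Periodicity

section Boundary

lemma mem_tailRing_of_r_eq {w α : Λ} (h : C.r α = w) : pTail C α ∈ tailRing C w :=
  fun _ hR => hR.2 ⟨α, h, rfl⟩

lemma empty_mem_tailRing {w : Λ} : (∅ : Set Λ) ∈ tailRing C w :=
  fun _ hR => hR.1.1.1

lemma union_mem_tailRing {w : Λ} {E F : Set Λ} (hE : E ∈ tailRing C w)
    (hF : F ∈ tailRing C w) : E ∪ F ∈ tailRing C w :=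
  fun R hR => hR.1.1.2.1 E (hE R hR) F (hF R hR)

lemma diff_mem_tailRing {w : Λ} {E F : Set Λ} (hE : E ∈ tailRing C w)
    (hF : F ∈ tailRing C w) : E \ F ∈ tailRing C w :=
  fun R hR => hR.1.1.2.2.2 E (hE R hR) F (hF R hR)

lemma biUnion_pTail_mem_tailRing {w : Λ} {H : Set Λ} (hH : H.Finite)
    (hHw : ∀ h ∈ H, C.r h = w) : (⋃ h ∈ H, pTail C h) ∈ tailRing C w := by
  induction H, hH using Set.Finite.induction_on with
  | empty => simpa using empty_mem_tailRing
  | @insert a H _ _ ih =>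
    rw [Set.biUnion_insert]
    exact union_mem_tailRing (mem_tailRing_of_r_eq (hHw a (Set.mem_insert a H)))
      (ih fun h hh => hHw h (Set.mem_insert_of_mem a hh))

lemma pShift_pTail_mem_tailRing (hfa : FinitelyAligned C) (β δ : Λ) :
    pShift C β (pTail C δ) ∈ tailRing C (C.s β) := by
  obtain ⟨G, hGfin, hG⟩ := hfa β δ
  rw [pShift_pTail_eq_biUnion hG]
  exact biUnion_pTail_mem_tailRing hGfin.pShift fun _ hd => hd.1.symm

lemma mem_boundarySet_of_mem_lamStarStar {v : Λ} (hv : C.r v = v) {x : Set Λ}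
    (hx : x ∈ lamStar C v) (hxmax : x ∈ lamStarStar C v) :
    (Sigma.mk (⟨v, hv⟩ : Vertex C) (⟨x, hx⟩ : Xv C v) : Xtotal C) ∈ boundarySet C :=
  @subset_closure _ (XtotalTop C) _ _ hxmax

lemma exists_mem_lamStarStar_of_mem_boundarySet {v : Λ} (hv : C.r v = v) {x : Set Λ}
    (hx : x ∈ lamStar C v)
    (hb : (Sigma.mk (⟨v, hv⟩ : Vertex C) (⟨x, hx⟩ : Xv C v) : Xtotal C) ∈ boundarySet C) :
    ∀ E ∈ UC C v x, ∃ y ∈ lamStarStar C v, E ∈ UC C v y := by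
  intro E hE
  let _ : ∀ w : Vertex C, TopologicalSpace (Xv C w.1) := fun w => XvTop C w.1
  have hopen : IsOpen (@Sigma.mk (Vertex C) (fun w => Xv C w.1) ⟨v, hv⟩ ''
      {p : Xv C v | E ∈ UC C v p.1}) :=
    isOpenMap_sigmaMk _ (TopologicalSpace.GenerateOpen.basic _ ⟨E, hE.1, rfl⟩)
  obtain ⟨_, ⟨y, hyE, rfl⟩, hymax⟩ := mem_closure_iff.1 hb _ hopen ⟨⟨x, hx⟩, hE, rfl⟩
  exact ⟨y.1, hymax, hyE⟩

lemma HasPeriodicity.pMulStar_subset [Countable Λ] (hfa : FinitelyAligned C) {α β : Λ}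
    (hper : HasPeriodicity C α β) (hs : C.s α = C.s β) (hr : C.r α = C.r β) {x : Set Λ}
    (hb : ∀ E ∈ UC C (C.s α) x, ∃ y ∈ lamStarStar C (C.s α), E ∈ UC C (C.s α) y) :
    pMulStar C α x ⊆ pMulStar C β x := by
  rintro δ ⟨γ, hγx, hγ, hαγδ⟩
  by_contra hδ
  set F := pShift C β (pTail C δ)
  have hE : pTail C γ \ F ∈ UC C (C.s α) x :=
    ⟨diff_mem_tailRing (mem_tailRing_of_r_eq hγ.symm)
      (hs ▸ pShift_pTail_mem_tailRing hfa β δ),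
      γ, hγx, fun η hη => ⟨hη.2, fun hηF => hδ ⟨η, hη.1, hηF⟩⟩⟩
  obtain ⟨y, hy, -, a, hay, hyE⟩ := hb _ hE
  have hγy : γ ∈ y :=
    pHereditary_of_mem_lamStarStar hy a hay γ (hyE ⟨hay, mem_pTail_self C a⟩).1
  have hδβy : δ ∈ pMulStar C β y := hper.pMulStar_eq hfa hs hr hy ▸ ⟨γ, hγy, hγ, hαγδ⟩
  obtain ⟨γ', hγ'y, hγ', hβγ'⟩ := hδβy
  obtain ⟨ξ, hξy, hξa, hξγ'⟩ := exists_mem_of_pDirected hy.2.1 hay hγ'y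
  exact (hyE ⟨hξy, hξa⟩).2 (mem_pShift_pTail_of_mem_pTail ⟨hγ', hβγ'⟩ hξγ')

end Boundary

end CategoryOfPaths

open CategoryOfPaths in
theorem statement17_general {Λ : Type u} [Countable Λ] (C : CategoryOfPaths Λ)
    (hfa : FinitelyAligned C) (α β : Λ)
    (hs : C.s α = C.s β) (hr : C.r α = C.r β) :
    (∀ γ : Λ, C.s α = C.r γ → pMeets C (C.comp α γ) (C.comp β γ)) ↔
      ∀ (x : Set Λ) (hx : x ∈ lamStar C (C.s α)),
        (Sigma.mk (⟨C.s α, C.r_s α⟩ : Vertex C) (⟨x, hx⟩ : Xv C (C.s α)) : Xtotal C)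
            ∈ boundarySet C →
        pMulStar C α x = pMulStar C β x := by
  constructor
  · intro hper x hx hb
    have hper : HasPeriodicity C α β := hper
    have hnbhd := exists_mem_lamStarStar_of_mem_boundarySet (C.r_s α) hx hb
    exact (hper.pMulStar_subset hfa hs hr hnbhd).antisymm
      ((hper.symm hs).pMulStar_subset hfa hs.symm hr.symm (hs ▸ hnbhd))
  · intro hmul
    refine hasPeriodicity_of_forall_pMulStar_eq hs fun m hm => ?_
    have hx := lamStarStar_subset_lamStar (C.r_s α) hm
    exact hmul m hx (mem_boundarySet_of_mem_lamStarStar (C.r_s α) hx hm)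

/-- Lemma 8.8. `Λ` has `{α,β}`-periodicity iff `αx = βx` for
every `x ∈ s(α)∂Λ`. -/
theorem statement17 {Λ : Type u} [Countable Λ] (C : CategoryOfPaths Λ)
    (hfa : FinitelyAligned C) (α β : Λ) (hne : α ≠ β)
    (hs : C.s α = C.s β) (hr : C.r α = C.r β) :
    (∀ γ : Λ, C.s α = C.r γ → pMeets C (C.comp α γ) (C.comp β γ)) ↔
      ∀ (x : Set Λ) (hx : x ∈ lamStar C (C.s α)),
        (Sigma.mk (⟨C.s α, C.r_s α⟩ : Vertex C) (⟨x, hx⟩ : Xv C (C.s α)) : Xtotal C)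
            ∈ boundarySet C →
        pMulStar C α x = pMulStar C β x :=
  statement17_general C hfa α β hs hr
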